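/- Every bireal biquaternion of norm 1 whose scalar part has positive real part can be written as exp((i y/2)·b) = cosh(y/2) + i·sinh(y/2)·b for some real y and real unit vector quaternion b. -/

import Mathlib

/-- Embedding of the real quaternions into the biquaternions (complexified quaternions). -/
noncomputable def toB (q : Quaternion ℝ) : Quaternion ℂ :=
  ⟨(q.re : ℂ), (q.imI : ℂ), (q.imJ : ℂ), (q.imK : ℂ)⟩

/-- Componentwise complex (imaginary) conjugation of a biquaternion. -/
noncomputable def cstar (q : Quaternion ℂ) : Quaternion ℂ :=
  ⟨star q.re, star q.imI, star q.imJ, star q.imK⟩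

/-- Biconjugation: quaternion conjugation composed with complex conjugation. -/
noncomputable def biconj (q : Quaternion ℂ) : Quaternion ℂ := cstar (star q)

/-!
Bireality says that `B = a + i • v` with `a` real and `v` a pure real quaternion, and then
`B * star B = a² - ‖v‖²`. So `(a, ‖v‖)` lies on the unit hyperbola, on its right branch since
`a > 0`, and hence equals `(cosh (y/2), sinh (y/2))` for `y = 2 arsinh ‖v‖`; finally `b` is `v`
normalised (any pure unit quaternion if `v = 0`).
-/

open Quaternion Complex

def imPart (q : ℍ[ℂ]) : ℍ[ℝ] := ⟨q.re.im, q.imI.im, q.imJ.im, q.imK.im⟩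

section Components

variable (q : ℍ[ℝ]) (p : ℍ[ℂ])

@[simp] lemma re_toB : (toB q).re = q.re := rfl
@[simp] lemma imI_toB : (toB q).imI = q.imI := rfl
@[simp] lemma imJ_toB : (toB q).imJ = q.imJ := rfl
@[simp] lemma imK_toB : (toB q).imK = q.imK := rfl

@[simp] lemma re_cstar : (cstar p).re = star p.re := rfl
@[simp] lemma imI_cstar : (cstar p).imI = star p.imI := rfl
@[simp] lemma imJ_cstar : (cstar p).imJ = star p.imJ := rfl
@[simp] lemma imK_cstar : (cstar p).imK = star p.imK := rfl

@[simp] lemma re_imPart : (imPart p).re = p.re.im := rfl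
@[simp] lemma imI_imPart : (imPart p).imI = p.imI.im := rfl
@[simp] lemma imJ_imPart : (imPart p).imJ = p.imJ.im := rfl
@[simp] lemma imK_imPart : (imPart p).imK = p.imK.im := rfl

end Components

lemma toB_smul (r : ℝ) (q : ℍ[ℝ]) : toB (r • q) = (r : ℂ) • toB q := by
  ext <;> simp

lemma re_imPart_eq_zero_of_biconj_eq_self {B : ℍ[ℂ]} (h : biconj B = B) :
    (imPart B).re = 0 := by
  have hre : -B.re.im = B.re.im := by simpa [biconj] using congrArg (·.re.im) h
  rw [re_imPart]
  linarith

lemma eq_coe_add_I_smul_toB_imPart_of_biconj_eq_self {B : ℍ[ℂ]} (h : biconj B = B) :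
    B = ((B.re.re : ℂ) : ℍ[ℂ]) + I • toB (imPart B) := by
  have hre := congrArg (·.re.im) h
  have hI := congrArg (·.imI.re) h
  have hJ := congrArg (·.imJ.re) h
  have hK := congrArg (·.imK.re) h
  simp [biconj] at hre hI hJ hK
  ext <;> apply Complex.ext <;> simp <;> linarith

lemma normSq_coe_add_I_smul_toB (a : ℝ) {v : ℍ[ℝ]} (hv : v.re = 0) :
    normSq (((a : ℂ) : ℍ[ℂ]) + I • toB v) = ((a ^ 2 - ‖v‖ ^ 2 : ℝ) : ℂ) := by
  rw [sq ‖v‖, ← normSq_eq_norm_mul_self, normSq_def', normSq_def']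
  simp [hv, mul_pow]
  ring

lemma exists_eq_norm_smul_of_re_eq_zero (v : ℍ[ℝ]) (hv : v.re = 0) :
    ∃ b : ℍ[ℝ], b.re = 0 ∧ ‖b‖ = 1 ∧ v = ‖v‖ • b := by
  rcases eq_or_ne v 0 with rfl | hv0
  · refine ⟨(I : ℍ[ℝ]), by simp, ?_, by simp⟩
    rw [norm_eq_sqrt_real_inner, inner_self, normSq_def']
    simp
  · exact ⟨‖v‖⁻¹ • v, by simp [hv], by simp [norm_smul, hv0], by simp [smul_smul, hv0]⟩

lemma Real.cosh_arsinh_eq_of_sq_sub_sq_eq_one {a s : ℝ} (ha : 0 < a) (h : a ^ 2 - s ^ 2 = 1) :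
    Real.cosh (Real.arsinh s) = a := by
  rw [Real.cosh_arsinh, show 1 + s ^ 2 = a ^ 2 by linarith, Real.sqrt_sq ha.le]

/-- Every bireal biquaternion of norm 1 whose scalar part has positive real part is a
boost-spinor: B = cosh(y/2) + i·sinh(y/2)·b for some rapidity y and real unit vector b. -/
theorem stmt6 (B : Quaternion ℂ) (hbireal : biconj B = B) (hnorm : B * star B = 1)
    (hpos : 0 < B.re.re) :
    ∃ (y : ℝ) (b : Quaternion ℝ), b.re = 0 ∧ ‖b‖ = 1 ∧
      B = (((Real.cosh (y / 2) : ℝ) : ℂ) : Quaternion ℂ)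
          + (Complex.I * ((Real.sinh (y / 2) : ℝ) : ℂ)) • toB b := by
  have hB := eq_coe_add_I_smul_toB_imPart_of_biconj_eq_self hbireal
  have hv := re_imPart_eq_zero_of_biconj_eq_self hbireal
  set a := B.re.re
  set v := imPart B
  have hav : a ^ 2 - ‖v‖ ^ 2 = 1 := by
    rwa [self_mul_star, hB, normSq_coe_add_I_smul_toB a hv, ← coe_one, coe_inj, ← ofReal_one,
      ofReal_inj] at hnorm
  obtain ⟨b, hb, hb1, hvb⟩ := exists_eq_norm_smul_of_re_eq_zero v hv
  refine ⟨2 * Real.arsinh ‖v‖, b, hb, hb1, ?_⟩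
  rwa [mul_div_cancel_left₀ _ two_ne_zero, Real.sinh_arsinh,
    Real.cosh_arsinh_eq_of_sq_sub_sq_eq_one hpos hav, mul_smul, ← toB_smul, ← hvb]
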